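/- Let q be a prime power and d ≥ 1. In the polynomial ring F̄_q[X_0,…,X_{d-1}], the Moore determinant det((X_i^{q^j})_{0≤i,j≤d-1}) equals a nonzero constant multiple of the product, over a set of representatives (a_0,…,a_{d-1}) of the points of P^{d-1}(F_q), of the linear forms a_0X_0 + ⋯ + a_{d-1}X_{d-1}. -/

import Mathlib

/-!
A linear form `ℓ = ∑ aᵢ Xᵢ` with coefficients in `𝔽_q` satisfies `ℓ ^ q ^ j = ∑ aᵢ Xᵢ ^ q ^ j`,
because the `q`-power Frobenius is an `𝔽_q`-algebra map. So the row `(ℓ ^ q ^ j)_j` is a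
combination of the rows of the Moore matrix; substituting it for row `k` multiplies the
determinant by `a_k` and visibly makes it divisible by `ℓ`. The forms attached to distinct points
of `ℙ^{d-1}(𝔽_q)` are irreducible and pairwise non-associated, so their product divides the Moore
determinant as well. Both are homogeneous of degree `#ℙ^{d-1}(𝔽_q) = ∑_{j<d} q ^ j`, and the Moore
determinant is nonzero (its diagonal monomial has coefficient `1`), so the quotient is a nonzero
constant.
-/

open MvPolynomial

namespace MvPolynomial

variable {σ ι R K : Type*}

theorem exists_eq_C_mul_of_dvd_of_isHomogeneous [CommRing R] [IsDomain R]
    {P M : MvPolynomial σ R} {n : ℕ} (hP : P.IsHomogeneous n) (hM : M.IsHomogeneous n)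
    (hM0 : M ≠ 0) (hPM : P ∣ M) : ∃ c, c ≠ 0 ∧ M = C c * P := by
  obtain ⟨Q, rfl⟩ := hPM
  have hP0 : P ≠ 0 := left_ne_zero_of_mul hM0
  have hQ0 : Q ≠ 0 := right_ne_zero_of_mul hM0
  have hQ : Q.totalDegree = 0 := by
    have := hM.totalDegree hM0
    rw [totalDegree_mul_of_isDomain hP0 hQ0, hP.totalDegree hP0] at this
    omega
  rw [totalDegree_eq_zero_iff_eq_C] at hQ
  refine ⟨coeff 0 Q, fun h ↦ hQ0 (by rw [hQ, h, C_0]), ?_⟩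
  rw [mul_comm, ← hQ]

section LinearForm

variable [Fintype ι]

noncomputable def linearForm [CommSemiring R] (a : ι → R) : MvPolynomial ι R :=
  ∑ i, C (a i) * X i

theorem coeff_single_one_linearForm [CommSemiring R] (a : ι → R) (i : ι) :
    coeff (Finsupp.single i 1) (linearForm a) = a i := by
  classical
  simp [linearForm, coeff_sum, coeff_C_mul, coeff_X, Finsupp.single_left_inj]

theorem isHomogeneous_linearForm [CommSemiring R] (a : ι → R) :
    (linearForm a).IsHomogeneous 1 :=
  IsHomogeneous.sum _ _ _ fun i _ ↦ isHomogeneous_C_mul_X (a i) i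

theorem linearForm_ne_zero [CommSemiring R] {a : ι → R} (ha : a ≠ 0) : linearForm a ≠ 0 := by
  obtain ⟨i, hi⟩ := Function.ne_iff.1 ha
  exact fun h ↦ hi (by rw [← coeff_single_one_linearForm a i, h, coeff_zero, Pi.zero_apply])

theorem irreducible_linearForm [Field K] {a : ι → K} (ha : a ≠ 0) :
    Irreducible (linearForm a) := by
  obtain ⟨i, hi⟩ := Function.ne_iff.1 ha
  refine irreducible_of_totalDegree_eq_one
    ((isHomogeneous_linearForm a).totalDegree (linearForm_ne_zero ha)) fun x hx ↦ ?_
  have hxi := hx (Finsupp.single i 1)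
  rw [coeff_single_one_linearForm] at hxi
  exact isUnit_iff_ne_zero.2 fun hx0 ↦ hi (zero_dvd_iff.1 (hx0 ▸ hxi))

theorem exists_eq_smul_of_linearForm_dvd [Field K] {a b : ι → K} (hb : b ≠ 0)
    (h : linearForm a ∣ linearForm b) : ∃ c : K, b = c • a := by
  obtain ⟨c, -, hc⟩ := exists_eq_C_mul_of_dvd_of_isHomogeneous (isHomogeneous_linearForm a)
    (isHomogeneous_linearForm b) (linearForm_ne_zero hb) h
  refine ⟨c, ?_⟩
  ext i
  rw [← coeff_single_one_linearForm b i, hc, coeff_C_mul, coeff_single_one_linearForm]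
  rfl

end LinearForm

end MvPolynomial

theorem FiniteField.sum_algebraMap_mul_pow_card_pow {F R ι : Type*} [Field F] [Fintype F]
    [CommRing R] [Algebra F R] (s : Finset ι) (a : ι → F) (x : ι → R) (j : ℕ) :
    (∑ i ∈ s, algebraMap F R (a i) * x i) ^ Fintype.card F ^ j
      = ∑ i ∈ s, algebraMap F R (a i) * x i ^ Fintype.card F ^ j := by
  have hfrob (y : R) : y ^ Fintype.card F ^ j = (frobeniusAlgHom F R ^ j) y := by
    rw [AlgHom.coe_pow, coe_frobeniusAlgHom, pow_iterate]
  simp only [hfrob, map_sum, map_mul, AlgHom.commutes]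

theorem Projectivization.mk_eq_mk_of_algebraMap_comp_eq_smul {F K ι : Type*} [Field F] [Field K]
    [Algebra F K] {a b : ι → F} (ha : a ≠ 0) (hb : b ≠ 0) {c : K}
    (h : algebraMap F K ∘ b = c • (algebraMap F K ∘ a)) : mk F b hb = mk F a ha := by
  obtain ⟨k, hk⟩ := Function.ne_iff.1 ha
  have hc : c = algebraMap F K (b k / a k) := by
    rw [map_div₀, eq_div_iff ((map_ne_zero _).2 hk)]
    exact (congrFun h k).symm
  rw [mk_eq_mk_iff']
  refine ⟨b k / a k, funext fun i ↦ (algebraMap F K).injective ?_⟩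
  simpa [hc] using (congrFun h i).symm

theorem Finsupp.sum_single_perm_apply {ι M : Type*} [Fintype ι] [AddCommMonoid M]
    (σ : Equiv.Perm ι) (f : ι → M) (j : ι) : (∑ i, single (σ i) (f i)) (σ j) = f j := by
  classical
  simp [finsetSum_apply, single_apply, σ.injective.eq_iff]

namespace Matrix

variable {R : Type*} [CommRing R] {n : ℕ}

def moore (q : ℕ) (x : Fin n → R) : Matrix (Fin n) (Fin n) R :=
  of fun i j ↦ x i ^ q ^ (j : ℕ)

theorem dvd_mul_det_moore {q : ℕ} (hq : 0 < q) (a x : Fin n → R)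
    (hfrob : ∀ j : Fin n, (∑ i, a i * x i) ^ q ^ (j : ℕ) = ∑ i, a i * x i ^ q ^ (j : ℕ))
    (k : Fin n) : (∑ i, a i * x i) ∣ a k * (moore q x).det := by
  set y := ∑ i, a i * x i
  have hrow : (fun j : Fin n ↦ y ^ q ^ (j : ℕ)) = ∑ i, a i • moore q x i := by
    ext j
    simp [hfrob, moore]
  have hfactor :
      (fun j : Fin n ↦ y ^ q ^ (j : ℕ)) = y • fun j : Fin n ↦ y ^ (q ^ (j : ℕ) - 1) := by
    ext j
    rw [Pi.smul_apply, smul_eq_mul, ← pow_succ', Nat.sub_add_cancel (Nat.one_le_pow _ _ hq)]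
  have hdet : a k * (moore q x).det = ((moore q x).updateRow k fun j ↦ y ^ q ^ (j : ℕ)).det := by
    rw [hrow, det_updateRow_sum, smul_eq_mul]
  rw [hdet, hfactor, det_updateRow_smul]
  exact dvd_mul_right _ _

theorem isHomogeneous_det_moore_X (q : ℕ) :
    (moore q (X : Fin n → MvPolynomial (Fin n) R)).det.IsHomogeneous
      (∑ j : Fin n, q ^ (j : ℕ)) := by
  rw [det_apply]
  refine IsHomogeneous.sum _ _ _ fun σ _ ↦ ?_
  rw [Units.smul_def, ← mem_homogeneousSubmodule]
  exact zsmul_mem (IsHomogeneous.prod _ _ _ fun i _ ↦ isHomogeneous_X_pow _ _) _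

theorem coeff_det_moore_X {q : ℕ} (hq : 1 < q) :
    coeff (∑ i : Fin n, Finsupp.single i (q ^ (i : ℕ)))
      (moore q (X : Fin n → MvPolynomial (Fin n) R)).det = 1 := by
  classical
  have hterm (σ : Equiv.Perm (Fin n)) :
      ∏ i, moore q X (σ i) i = monomial (∑ i, Finsupp.single (σ i) (q ^ (i : ℕ))) (1 : R) := by
    simp [moore, monomial_sum_one, X_pow_eq_monomial]
  have hdiag (σ : Equiv.Perm (Fin n)) (hσ : σ ≠ 1) :
      ∑ i, Finsupp.single (σ i) (q ^ (i : ℕ)) ≠ ∑ i : Fin n, Finsupp.single i (q ^ (i : ℕ)) := by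
    intro h
    refine hσ (Equiv.ext fun j ↦ Fin.val_injective (Nat.pow_right_injective hq ?_))
    have := congrArg (· (σ j)) h
    simp only [Finsupp.sum_single_perm_apply] at this
    simpa [Finsupp.finsetSum_apply, Finsupp.single_apply] using this.symm
  rw [det_apply, coeff_sum, Finset.sum_eq_single 1]
  · rw [hterm]
    simp [coeff_monomial]
  · intro σ _ hσ
    rw [hterm, Units.smul_def, coeff_smul, coeff_monomial, if_neg (hdiag σ hσ), smul_zero]
  · simp

theorem det_moore_X_ne_zero [Nontrivial R] {q : ℕ} (hq : 1 < q) :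
    (moore q (X : Fin n → MvPolynomial (Fin n) R)).det ≠ 0 := fun h ↦
  one_ne_zero ((coeff_det_moore_X hq).symm.trans (by rw [h, coeff_zero]))

end Matrix

theorem stmt_1_general (F : Type*) [Field F] [Fintype F] (d : ℕ)
    (rep : Projectivization F (Fin d → F) → (Fin d → F))
    (hne : ∀ v, rep v ≠ 0)
    (hrep : ∀ v, Projectivization.mk F (rep v) (hne v) = v) :
    ∃ c : AlgebraicClosure F, c ≠ 0 ∧
      (Matrix.of fun i j : Fin d =>
          (X i : MvPolynomial (Fin d) (AlgebraicClosure F)) ^ Fintype.card F ^ (j : ℕ)).det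
        = C c * ∏ᶠ v : Projectivization F (Fin d → F),
            ∑ i : Fin d, C (algebraMap F (AlgebraicClosure F) (rep v i)) * X i := by
  classical
  set K := AlgebraicClosure F
  set q := Fintype.card F
  have : Fintype (Projectivization F (Fin d → F)) := Fintype.ofFinite _
  let a v : Fin d → K := algebraMap F K ∘ rep v
  have ha v : a v ≠ 0 := fun h ↦ hne v (funext fun i ↦ (map_eq_zero _).1 (congrFun h i))
  have hdvd v : linearForm (a v) ∣ (Matrix.moore q X).det := by
    obtain ⟨k, hk⟩ := Function.ne_iff.1 (ha v)
    have hfrob (j : Fin d) := by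
      simpa only [MvPolynomial.algebraMap_apply] using
        FiniteField.sum_algebraMap_mul_pow_card_pow (R := MvPolynomial (Fin d) K) Finset.univ
          (rep v) X j
    exact ((isUnit_iff_ne_zero.2 hk).map C).dvd_mul_left.1
      (Matrix.dvd_mul_det_moore Fintype.card_pos _ _ hfrob k)
  have hcoprime : Pairwise fun v w ↦ IsRelPrime (linearForm (a v)) (linearForm (a w)) := by
    intro v w hvw
    refine (irreducible_linearForm (ha v)).isRelPrime_iff_not_dvd.2 fun h ↦ hvw ?_
    obtain ⟨c, hc⟩ := exists_eq_smul_of_linearForm_dvd (ha w) h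
    rw [← hrep v, ← hrep w]
    exact (Projectivization.mk_eq_mk_of_algebraMap_comp_eq_smul (hne v) (hne w) hc).symm
  have hcard : Fintype.card (Projectivization F (Fin d → F)) = ∑ j : Fin d, q ^ (j : ℕ) := by
    rw [Fintype.card_eq_nat_card, Projectivization.card_of_finrank F _ (Module.finrank_fin_fun F),
      Fin.sum_univ_eq_sum_range, Nat.card_eq_fintype_card]
  have hprod := IsHomogeneous.prod Finset.univ (fun v ↦ linearForm (a v)) (fun _ ↦ 1)
    fun v _ ↦ isHomogeneous_linearForm (a v)
  simp only [Finset.sum_const, Finset.card_univ, smul_eq_mul, mul_one, hcard] at hprod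
  rw [finprod_eq_prod_of_fintype]
  exact exists_eq_C_mul_of_dvd_of_isHomogeneous hprod (Matrix.isHomogeneous_det_moore_X q)
    (Matrix.det_moore_X_ne_zero Fintype.one_lt_card) (Fintype.prod_dvd_of_isRelPrime hcoprime hdvd)

/-- The Moore determinant polynomial equals a nonzero constant times the product of the
linear forms attached to a set of representatives of `P^{d-1}(F_q)`. -/
theorem stmt_1 (F : Type*) [Field F] [Fintype F] (d : ℕ) (hd : 1 ≤ d)
    (rep : Projectivization F (Fin d → F) → (Fin d → F))
    (hne : ∀ v, rep v ≠ 0)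
    (hrep : ∀ v, Projectivization.mk F (rep v) (hne v) = v) :
    ∃ c : AlgebraicClosure F, c ≠ 0 ∧
      (Matrix.of fun i j : Fin d =>
          (X i : MvPolynomial (Fin d) (AlgebraicClosure F)) ^ Fintype.card F ^ (j : ℕ)).det
        = C c * ∏ᶠ v : Projectivization F (Fin d → F),
            ∑ i : Fin d, C (algebraMap F (AlgebraicClosure F) (rep v i)) * X i :=
  stmt_1_general F d rep hne hrep
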